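/- arXiv:2503.00406 — 3 statements merged into one kernel-verified Lean document; each statement's English description precedes it below -/
import Mathlib

section
/- Let d be a common divisor of k and n (with n, d positive). If χ_{n/d, k/d}(G) exists, then χ_{n,k}(G) exists and χ_{n,k}(G) ≤ χ_{n/d, k/d}(G). -/
open SimpleGraph

def ClosedColoring {V : Type*} (G : SimpleGraph V) [G.LocallyFinite]
    (n k : ℤ) (ℓ : V → ℤ) : Prop :=
  ∀ v : V, (ℓ v + ∑ u ∈ G.neighborFinset v, ℓ u) ≡ k [ZMOD n]

def ProperLabeling {V : Type*} (G : SimpleGraph V) (ℓ : V → ℤ) : Prop :=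
  ∀ ⦃v w : V⦄, G.Adj v w → ℓ v ≠ ℓ w

def HasClosedChrom {V : Type*} (G : SimpleGraph V) [G.LocallyFinite]
    (n k : ℤ) (c : ℕ) : Prop :=
  (∃ ℓ : V → ℤ, ProperLabeling G ℓ ∧ ClosedColoring G n k ℓ ∧
      (Set.range ℓ).Finite ∧ (Set.range ℓ).ncard = c) ∧
  ∀ ℓ : V → ℤ, ProperLabeling G ℓ → ClosedColoring G n k ℓ →
      (Set.range ℓ).Finite → c ≤ (Set.range ℓ).ncard

/-! Multiplying a proper closed coloring with remainder `k/d` mod `n/d` by `d` gives a proper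
closed coloring with remainder `k` mod `n` using the same number of labels; the minimum over
the nonempty set of such label counts then exists and is at most that number. -/

section

variable {V : Type*} {G : SimpleGraph V}

theorem ProperLabeling.const_mul {ℓ : V → ℤ} (hℓ : ProperLabeling G ℓ) {d : ℤ} (hd : d ≠ 0) :
    ProperLabeling G (fun v => d * ℓ v) :=
  fun _ _ hvw heq => hℓ hvw (mul_left_cancel₀ hd heq)

theorem ClosedColoring.const_mul [G.LocallyFinite] {n k : ℤ} {ℓ : V → ℤ}
    (hℓ : ClosedColoring G n k ℓ) (d : ℤ) :
    ClosedColoring G (d * n) (d * k) (fun v => d * ℓ v) := by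
  intro v
  rw [← Finset.mul_sum, ← mul_add]
  exact (hℓ v).mul_left' (c := d)

theorem range_const_mul_finite {ℓ : V → ℤ} (hℓ : (Set.range ℓ).Finite) (d : ℤ) :
    (Set.range fun v => d * ℓ v).Finite := by
  simpa only [Set.range_comp'] using hℓ.image (d * ·)

theorem ncard_range_const_mul (ℓ : V → ℤ) {d : ℤ} (hd : d ≠ 0) :
    (Set.range fun v => d * ℓ v).ncard = (Set.range ℓ).ncard := by
  rw [Set.range_comp' (d * ·) ℓ, Set.ncard_image_of_injective _ (mul_right_injective₀ hd)]

theorem exists_hasClosedChrom_le [G.LocallyFinite] {n k : ℤ} {ℓ : V → ℤ}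
    (hprop : ProperLabeling G ℓ) (hcc : ClosedColoring G n k ℓ) (hfin : (Set.range ℓ).Finite) :
    ∃ c : ℕ, HasClosedChrom G n k c ∧ c ≤ (Set.range ℓ).ncard := by
  classical
  have hP : ∃ m : ℕ, ∃ ℓ : V → ℤ, ProperLabeling G ℓ ∧ ClosedColoring G n k ℓ ∧
      (Set.range ℓ).Finite ∧ (Set.range ℓ).ncard = m :=
    ⟨_, ℓ, hprop, hcc, hfin, rfl⟩
  refine ⟨Nat.find hP, ⟨Nat.find_spec hP, ?_⟩, Nat.find_le ⟨ℓ, hprop, hcc, hfin, rfl⟩⟩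
  exact fun ℓ' hprop' hcc' hfin' => Nat.find_le ⟨ℓ', hprop', hcc', hfin', rfl⟩

end

theorem chi_divisor_general {V : Type*} (G : SimpleGraph V) [G.LocallyFinite]
    (n d k : ℤ) (hd : 0 < d) (hdk : d ∣ k) (hdn : d ∣ n) (c : ℕ)
    (h : HasClosedChrom G (n / d) (k / d) c) :
    ∃ c' : ℕ, HasClosedChrom G n k c' ∧ c' ≤ c := by
  obtain ⟨⟨ℓ, hprop, hcc, hfin, rfl⟩, -⟩ := h
  have hcc' := hcc.const_mul d
  rw [Int.mul_ediv_cancel' hdn, Int.mul_ediv_cancel' hdk] at hcc'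
  rw [← ncard_range_const_mul ℓ hd.ne']
  exact exists_hasClosedChrom_le (hprop.const_mul hd.ne') hcc' (range_const_mul_finite hfin d)

theorem chi_divisor {V : Type*} (G : SimpleGraph V) [G.LocallyFinite]
    (n d k : ℤ) (hn : 0 < n) (hd : 0 < d) (hdk : d ∣ k) (hdn : d ∣ n) (c : ℕ)
    (h : HasClosedChrom G (n / d) (k / d) c) :
    ∃ c' : ℕ, HasClosedChrom G n k c' ∧ c' ≤ c :=
  chi_divisor_general G n d k hd hdk hdn c h
end

section
/- Let k ∈ ℤ and i, j, n ∈ ℤ⁺. The complete bipartite graph K_{i,j} admits a closed coloring with remainder k mod n if and only if gcd(ij − 1, n) divides (j − 1)k; in that case χ_{n,k}(K_{i,j}) = 2. -/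
/-!
A closed coloring of `K_{i,j}` is constant modulo `n` on each side (two vertices of one side
have the same closed neighbourhood apart from themselves), so it reduces to a solution of
`a + j b ≡ k`, `b + i a ≡ k (mod n)`. Eliminating `b` gives `(ij - 1) a ≡ (j - 1) k`, which is
solvable exactly when `gcd(ij - 1, n) ∣ (j - 1) k`. A solution can be made proper by shifting
`b` by `n`, and two labels are needed on any graph with an edge.
-/

open SimpleGraph

noncomputable instance (i j : ℕ) : (completeBipartiteGraph (Fin i) (Fin j)).LocallyFinite :=
  fun _ => (Set.toFinite _).fintype

theorem Int.exists_modEq_system_iff {n k i j : ℤ} :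
    (∃ a b : ℤ, a + j * b ≡ k [ZMOD n] ∧ b + i * a ≡ k [ZMOD n]) ↔
      (Int.gcd (i * j - 1) n : ℤ) ∣ (j - 1) * k := by
  rw [Int.coe_gcd, gcd_dvd_iff_exists]
  constructor
  · rintro ⟨a, b, h₁, h₂⟩
    obtain ⟨y, hy⟩ := ((h₂.mul_left j).sub h₁).dvd
    exact ⟨a, y, by linear_combination hy⟩
  · rintro ⟨x, y, h⟩
    refine ⟨x, k - i * x, Int.modEq_iff_dvd.2 ⟨-y, by linear_combination -h⟩, ?_⟩
    rw [sub_add_cancel]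

theorem Int.exists_ne_modEq {n : ℤ} (hn : n ≠ 0) (a b : ℤ) : ∃ b', b' ≠ a ∧ b' ≡ b [ZMOD n] := by
  by_cases hb : b = a
  · exact ⟨b + n, by omega, Int.modEq_iff_dvd.2 ⟨-1, by ring⟩⟩
  · exact ⟨b, hb, Int.ModEq.refl b⟩

theorem ProperLabeling.two_le_ncard_range {V : Type*} {G : SimpleGraph V} {ℓ : V → ℤ}
    (hℓ : ProperLabeling G ℓ) (hfin : (Set.range ℓ).Finite) {v w : V} (hvw : G.Adj v w) :
    2 ≤ (Set.range ℓ).ncard :=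
  (Set.one_lt_ncard_iff hfin).2 ⟨_, _, ⟨v, rfl⟩, ⟨w, rfl⟩, hℓ hvw⟩

section

variable {i j : ℕ} {n k : ℤ}

theorem SimpleGraph.completeBipartiteGraph_neighborFinset_inl (v : Fin i) :
    (completeBipartiteGraph (Fin i) (Fin j)).neighborFinset (Sum.inl v) =
      Finset.univ.map Function.Embedding.inr := by
  ext u
  cases u <;> simp [mem_neighborFinset]

theorem SimpleGraph.completeBipartiteGraph_neighborFinset_inr (u : Fin j) :
    (completeBipartiteGraph (Fin i) (Fin j)).neighborFinset (Sum.inr u) =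
      Finset.univ.map Function.Embedding.inl := by
  ext v
  cases v <;> simp [mem_neighborFinset]

theorem closedColoring_completeBipartiteGraph_iff {ℓ : Fin i ⊕ Fin j → ℤ} :
    ClosedColoring (completeBipartiteGraph (Fin i) (Fin j)) n k ℓ ↔
      (∀ v, ℓ (Sum.inl v) + ∑ u, ℓ (Sum.inr u) ≡ k [ZMOD n]) ∧
        ∀ u, ℓ (Sum.inr u) + ∑ v, ℓ (Sum.inl v) ≡ k [ZMOD n] := by
  simp [ClosedColoring, Sum.forall, completeBipartiteGraph_neighborFinset_inl,
    completeBipartiteGraph_neighborFinset_inr]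

theorem ClosedColoring.exists_modEq_system_of_completeBipartiteGraph (hi : 0 < i) (hj : 0 < j)
    {ℓ : Fin i ⊕ Fin j → ℤ} (h : ClosedColoring (completeBipartiteGraph (Fin i) (Fin j)) n k ℓ) :
    ∃ a b : ℤ, a + j * b ≡ k [ZMOD n] ∧ b + i * a ≡ k [ZMOD n] := by
  obtain ⟨hl, hr⟩ := closedColoring_completeBipartiteGraph_iff.1 h
  let v₀ : Fin i := ⟨0, hi⟩
  let u₀ : Fin j := ⟨0, hj⟩
  have hsum_l : ∑ v, ℓ (Sum.inl v) ≡ i * ℓ (Sum.inl v₀) [ZMOD n] := by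
    simpa using Int.ModEq.sum (s := Finset.univ) (g := fun _ => ℓ (Sum.inl v₀))
      fun v _ => Int.ModEq.add_right_cancel' _ ((hl v).trans (hl v₀).symm)
  have hsum_r : ∑ u, ℓ (Sum.inr u) ≡ j * ℓ (Sum.inr u₀) [ZMOD n] := by
    simpa using Int.ModEq.sum (s := Finset.univ) (g := fun _ => ℓ (Sum.inr u₀))
      fun u _ => Int.ModEq.add_right_cancel' _ ((hr u).trans (hr u₀).symm)
  exact ⟨ℓ (Sum.inl v₀), ℓ (Sum.inr u₀), (hsum_r.add_left _).symm.trans (hl v₀),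
    (hsum_l.add_left _).symm.trans (hr u₀)⟩

theorem hasClosedChrom_completeBipartiteGraph_two (hi : 0 < i) (hj : 0 < j) (hn : n ≠ 0)
    {a b : ℤ} (h₁ : a + j * b ≡ k [ZMOD n]) (h₂ : b + i * a ≡ k [ZMOD n]) :
    HasClosedChrom (completeBipartiteGraph (Fin i) (Fin j)) n k 2 := by
  obtain ⟨b', hb'a, hb'b⟩ := Int.exists_ne_modEq hn a b
  have : Nonempty (Fin i) := ⟨⟨0, hi⟩⟩
  have : Nonempty (Fin j) := ⟨⟨0, hj⟩⟩
  have hrange : Set.range (Sum.elim (fun _ : Fin i => a) (fun _ : Fin j => b')) = {a, b'} := by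
    rw [Set.Sum.elim_range, Set.range_const, Set.range_const, Set.singleton_union]
  refine ⟨⟨Sum.elim (fun _ => a) (fun _ => b'), ?_, ?_, hrange ▸ Set.toFinite _,
    hrange ▸ Set.ncard_pair hb'a.symm⟩, fun ℓ hℓ _ hfin => hℓ.two_le_ncard_range hfin
      (v := Sum.inl ⟨0, hi⟩) (w := Sum.inr ⟨0, hj⟩) (by simp)⟩
  · rintro (v | v) (w | w) hvw <;> simp_all [eq_comm]
  · refine closedColoring_completeBipartiteGraph_iff.2 ⟨fun _ => ?_, fun _ => ?_⟩
    · simpa using ((hb'b.mul_left _).add_left _).trans h₁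
    · simpa using (hb'b.add_right _).trans h₂

end

theorem chi_completeBipartite (k : ℤ) (i j n : ℕ) (hi : 0 < i) (hj : 0 < j) (hn : 0 < n) :
    ((∃ ℓ, ClosedColoring (completeBipartiteGraph (Fin i) (Fin j)) n k ℓ) ↔
        (Int.gcd ((i : ℤ) * j - 1) n : ℤ) ∣ ((j : ℤ) - 1) * k) ∧
      ((Int.gcd ((i : ℤ) * j - 1) n : ℤ) ∣ ((j : ℤ) - 1) * k →
        HasClosedChrom (completeBipartiteGraph (Fin i) (Fin j)) n k 2) := by
  have hchrom : (Int.gcd ((i : ℤ) * j - 1) n : ℤ) ∣ ((j : ℤ) - 1) * k →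
      HasClosedChrom (completeBipartiteGraph (Fin i) (Fin j)) n k 2 := fun hd => by
    obtain ⟨a, b, h₁, h₂⟩ := Int.exists_modEq_system_iff.2 hd
    exact hasClosedChrom_completeBipartiteGraph_two hi hj (by omega) h₁ h₂
  refine ⟨⟨fun ⟨ℓ, hℓ⟩ => ?_, fun hd => ?_⟩, hchrom⟩
  · exact Int.exists_modEq_system_iff.1 (hℓ.exists_modEq_system_of_completeBipartiteGraph hi hj)
  · obtain ⟨⟨ℓ, -, hℓ, -⟩, -⟩ := hchrom hd
    exact ⟨ℓ, hℓ⟩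
end

section
/- Let G be a j-regular graph. If gcd(j + 1, n) divides k, then χ_{n,k}(G) = χ(G). If G is finite and gcd(j + 1, n) does not divide k·|V(G)|, then no closed coloring with remainder k mod n of G exists. -/
open SimpleGraph

/-!
If `G` is `j`-regular, the closed neighbourhood sum of the labeling `v ↦ t + n · C v` is
`(j + 1) t` modulo `n`, whatever the colouring `C`; by Bézout a suitable `t` exists exactly when
`gcd (j + 1, n) ∣ k`, and taking `C` optimal with distinct colours sent to distinct labels gives
`χ(G)` labels, which no proper labeling can beat.
Conversely, summing all closed neighbourhood sums of a closed colouring `ℓ` of a finite graph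
counts every label `j + 1` times, so `(j + 1) ∑ ℓ ≡ |V| k (mod n)`, which forces
`gcd (j + 1, n) ∣ k |V|`.
-/

theorem Int.exists_mul_modEq_of_gcd_dvd {a n k : ℤ} (h : (Int.gcd a n : ℤ) ∣ k) :
    ∃ t, a * t ≡ k [ZMOD n] := by
  obtain ⟨m, rfl⟩ := h
  refine ⟨Int.gcdA a n * m, Int.modEq_iff_dvd.2 ⟨Int.gcdB a n * m, ?_⟩⟩
  rw [Int.gcd_eq_gcd_ab]
  ring

theorem Int.gcd_dvd_of_mul_modEq {a x b n : ℤ} (h : a * x ≡ b [ZMOD n]) :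
    (Int.gcd a n : ℤ) ∣ b := by
  have hb : b = (b - a * x) + a * x := by ring
  rw [hb]
  exact dvd_add ((Int.gcd_dvd_right a n).trans h.dvd) ((Int.gcd_dvd_left a n).mul_right x)

section

variable {V : Type*} {G : SimpleGraph V}

theorem ProperLabeling.chromaticNumber_le_ncard {ℓ : V → ℤ} (hℓ : ProperLabeling G ℓ)
    (hfin : (Set.range ℓ).Finite) : G.chromaticNumber ≤ (Set.range ℓ).ncard := by
  have : Fintype (Set.range ℓ) := hfin.fintype
  let C : G.Coloring (Set.range ℓ) :=
    Coloring.mk (Set.rangeFactorization ℓ) fun h heq => hℓ h (congrArg Subtype.val heq)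
  rw [← Nat.card_coe_set_eq, Nat.card_eq_fintype_card]
  exact C.colorable.chromaticNumber_le

theorem SimpleGraph.Coloring.properLabeling_comp {α : Type*} (C : G.Coloring α) {f : α → ℤ}
    (hf : Function.Injective f) : ProperLabeling G (f ∘ C) :=
  fun _ _ h heq => C.valid h (hf heq)

theorem hasClosedChrom_of_exists_ncard_le [G.LocallyFinite] {n k : ℤ} {c : ℕ} (hc : G.chromaticNumber = c)
    (h : ∃ ℓ, ProperLabeling G ℓ ∧ ClosedColoring G n k ℓ ∧ (Set.range ℓ).Finite ∧
      (Set.range ℓ).ncard ≤ c) :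
    HasClosedChrom G n k c := by
  have lower : ∀ ℓ, ProperLabeling G ℓ → (Set.range ℓ).Finite → c ≤ (Set.range ℓ).ncard :=
    fun ℓ hℓ hfin => by exact_mod_cast hc ▸ hℓ.chromaticNumber_le_ncard hfin
  obtain ⟨ℓ, hℓ, hclosed, hfin, hle⟩ := h
  exact ⟨⟨ℓ, hℓ, hclosed, hfin, hle.antisymm (lower ℓ hℓ hfin)⟩,
    fun ℓ hℓ _ hfin => lower ℓ hℓ hfin⟩

theorem SimpleGraph.sum_sum_neighborFinset [Fintype V] [G.LocallyFinite] {M : Type*}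
    [AddCommMonoid M] (f : V → M) :
    ∑ v, ∑ u ∈ G.neighborFinset v, f u = ∑ u, G.degree u • f u := by
  rw [Finset.sum_comm' (t' := Finset.univ) (s' := fun u => G.neighborFinset u) fun v u => by
    simp [mem_neighborFinset, G.adj_comm]]
  simp only [Finset.sum_const, card_neighborFinset_eq_degree]

variable [G.LocallyFinite] {j : ℕ}

theorem SimpleGraph.IsRegularOfDegree.closedColoring_const_add_mul
    (hG : G.IsRegularOfDegree j) {n k t : ℤ} (ht : (j + 1) * t ≡ k [ZMOD n]) (g : V → ℤ) :
    ClosedColoring G n k fun v => t + n * g v := by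
  intro v
  have hsum : t + n * g v + ∑ u ∈ G.neighborFinset v, (t + n * g u)
      = (j + 1) * t + n * (g v + ∑ u ∈ G.neighborFinset v, g u) := by
    simp only [Finset.sum_add_distrib, Finset.sum_const, card_neighborFinset_eq_degree, hG v,
      ← Finset.mul_sum, nsmul_eq_mul]
    ring
  rw [hsum]
  exact Int.modEq_add_fac_self.trans ht

theorem SimpleGraph.IsRegularOfDegree.hasClosedChrom (hG : G.IsRegularOfDegree j) {n k : ℤ}
    (hn : n ≠ 0) (hk : (Int.gcd (j + 1) n : ℤ) ∣ k) {c : ℕ} (hc : G.chromaticNumber = c) :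
    HasClosedChrom G n k c := by
  obtain ⟨t, ht⟩ := Int.exists_mul_modEq_of_gcd_dvd hk
  obtain ⟨C⟩ : G.Colorable c := chromaticNumber_le_iff_colorable.1 hc.le
  let f : Fin c → ℤ := fun i => t + n * i
  have hf : Function.Injective f := fun i i' h => by simpa [f, hn, Fin.val_inj] using h
  have hsub : Set.range (f ∘ C) ⊆ Set.range f := Set.range_comp_subset_range C f
  refine hasClosedChrom_of_exists_ncard_le hc ⟨f ∘ C, C.properLabeling_comp hf,
    hG.closedColoring_const_add_mul ht _, (Set.finite_range f).subset hsub, ?_⟩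
  calc (Set.range (f ∘ C)).ncard ≤ (Set.range f).ncard :=
        Set.ncard_le_ncard hsub (Set.finite_range f)
    _ = c := by rw [Set.ncard_range_of_injective hf, Nat.card_fin]

theorem ClosedColoring.mul_sum_modEq [Fintype V] (hG : G.IsRegularOfDegree j) {n k : ℤ}
    {ℓ : V → ℤ} (hℓ : ClosedColoring G n k ℓ) :
    (j + 1) * ∑ v, ℓ v ≡ Fintype.card V * k [ZMOD n] :=
  calc (j + 1) * ∑ v, ℓ v = ∑ v, (ℓ v + ∑ u ∈ G.neighborFinset v, ℓ u) := by
        simp only [Finset.sum_add_distrib, G.sum_sum_neighborFinset, hG _, nsmul_eq_mul,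
          ← Finset.mul_sum]
        ring
    _ ≡ ∑ _ : V, k [ZMOD n] := Int.ModEq.sum fun v _ => hℓ v
    _ = Fintype.card V * k := by simp

end

theorem chi_regular {V : Type*} (G : SimpleGraph V) [G.LocallyFinite]
    (j : ℕ) (hreg : G.IsRegularOfDegree j) (n : ℕ) (hn : 0 < n) (k : ℤ) :
    ((Int.gcd ((j : ℤ) + 1) n : ℤ) ∣ k →
      ∀ c : ℕ, G.chromaticNumber = c → HasClosedChrom G n k c) ∧
    (∀ _ : Fintype V, ¬ (Int.gcd ((j : ℤ) + 1) n : ℤ) ∣ k * (Nat.card V : ℤ) →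
      ¬ ∃ ℓ : V → ℤ, ClosedColoring G n k ℓ) := by
  refine ⟨fun hk c hc => hreg.hasClosedChrom (by exact_mod_cast hn.ne') hk hc, ?_⟩
  rintro _ hndvd ⟨ℓ, hℓ⟩
  rw [Nat.card_eq_fintype_card, mul_comm] at hndvd
  exact hndvd (Int.gcd_dvd_of_mul_modEq (hℓ.mul_sum_modEq hreg))
end
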